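/- Let N ≥ 1 and let {(λ_{j,n}, x_{j,n}, t_{j,n})}_{n∈ℕ}, indexed by j ≥ 1, be orthogonal parameter sequences in (0,∞)×ℝ^N×ℝ. Suppose that for each j there are sequences (λ̃_{j,n}, x̃_{j,n}, t̃_{j,n}) ∈ (0,∞)×ℝ^N×ℝ and constants (μ_j, y_j, s_j) ∈ (0,∞)×ℝ^N×ℝ such that λ̃_{j,n}/λ_{j,n} → μ_j, (x̃_{j,n} − x_{j,n})/λ_{j,n} → y_j, and (t̃_{j,n} − t_{j,n})/λ_{j,n} → s_j as n → ∞. Then the family {(λ̃_{j,n}, x̃_{j,n}, t̃_{j,n})}_{n∈ℕ}, j ≥ 1, is also orthogonal. -/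

import Mathlib

open Filter Topology

/-- Orthogonality of a family of parameter sequences. -/
def OrthoParams {N : ℕ} {ι : Type*} (lam : ι → ℕ → ℝ)
    (x : ι → ℕ → EuclideanSpace ℝ (Fin N)) (t : ι → ℕ → ℝ) : Prop :=
  ∀ j k : ι, j ≠ k →
    Tendsto (fun n => |Real.log (lam j n / lam k n)| + |t j n - t k n| / lam j n
      + ‖x j n - x k n‖ / lam j n) atTop atTop

/-!
Write `L = |log (λ_j/λ_k)|` and `D = |t_j - t_k| + ‖x_j - x_k‖`. The perturbation changes `L` by a
bounded amount, `λ_j` by a bounded factor, and `D` by at most `B (λ_j + λ_k)`. If `L` is large, so is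
the perturbed log term. Otherwise `λ_k ≤ e^L λ_j` with `L` bounded, so the error in `D / λ_j` is
bounded, `D / λ_j` is large, and so is the translation term of the perturbed family.
-/

section

variable {α : Type*} {l : Filter α}

lemma div_le_exp_abs_log_div {a b : ℝ} (ha : 0 < a) (hb : 0 < b) :
    b / a ≤ Real.exp |Real.log (a / b)| := by
  calc b / a = Real.exp (-Real.log (a / b)) := by
        rw [← Real.log_inv, inv_div, Real.exp_log (div_pos hb ha)]
    _ ≤ Real.exp |Real.log (a / b)| := Real.exp_le_exp.mpr (neg_le_abs _)

lemma abs_log_div_le_of_perturb {a b a' b' : ℝ} (ha : 0 < a) (hb : 0 < b) (ha' : 0 < a')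
    (hb' : 0 < b') :
    |Real.log (a / b)| ≤ |Real.log (a' / b')| + |Real.log (a' / a)| + |Real.log (b' / b)| := by
  simp only [Real.log_div ha.ne' hb.ne', Real.log_div ha'.ne' hb'.ne', Real.log_div ha'.ne' ha.ne',
    Real.log_div hb'.ne' hb.ne', ← Real.dist_eq]
  linarith [dist_triangle4 (Real.log a) (Real.log a') (Real.log b') (Real.log b),
    dist_comm (Real.log a) (Real.log a')]

lemma dist_add_dist_le_of_perturb {X Y : Type*} [PseudoMetricSpace X] [PseudoMetricSpace Y]
    (p q p' q' : X) (u v u' v' : Y) :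
    dist p q + dist u v ≤
      (dist p' q' + dist u' v') + (dist p' p + dist u' u) + (dist q' q + dist v' v) := by
  linarith [dist_triangle4 p p' q' q, dist_triangle4 u u' v' v, dist_comm p p', dist_comm u u']

lemma eventually_le_mul_of_tendsto_div {f g : α → ℝ} {c : ℝ} (hg : ∀ n, 0 < g n)
    (h : Tendsto (fun n => f n / g n) l (𝓝 c)) : ∀ᶠ n in l, f n ≤ (c + 1) * g n := by
  filter_upwards [h.eventually_le_const (lt_add_one c)] with n hn
  exact (div_le_iff₀ (hg n)).mp hn

lemma eventually_abs_log_le_of_tendsto {f : α → ℝ} {μ : ℝ} (hμ : 0 < μ)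
    (h : Tendsto f l (𝓝 μ)) : ∀ᶠ n in l, |Real.log (f n)| ≤ |Real.log μ| + 1 :=
  ((Real.continuousAt_log hμ.ne').tendsto.comp h).abs.eventually_le_const (lt_add_one _)

lemma tendsto_abs_log_div_add_div_of_perturb {a b a' b' D D' : α → ℝ} {M Ba Bb K : ℝ}
    (ha : ∀ n, 0 < a n) (hb : ∀ n, 0 < b n) (ha' : ∀ n, 0 < a' n) (hD' : ∀ n, 0 ≤ D' n)
    (hlog : ∀ᶠ n in l, |Real.log (a n / b n)| ≤ |Real.log (a' n / b' n)| + M)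
    (hD : ∀ᶠ n in l, D n ≤ D' n + Ba * a n + Bb * b n)
    (ha'le : ∀ᶠ n in l, a' n ≤ K * a n)
    (h : Tendsto (fun n => |Real.log (a n / b n)| + D n / a n) l atTop) :
    Tendsto (fun n => |Real.log (a' n / b' n)| + D' n / a' n) l atTop := by
  rw [tendsto_atTop]
  intro C
  set R := max C 0 + M
  filter_upwards [hlog, hD, ha'le,
    tendsto_atTop.mp h (R + Ba + |Bb| * Real.exp R + K * max C 0)] with n hlog hD ha'le hdiv
  have hquot : 0 ≤ D' n / a' n := div_nonneg (hD' n) (ha' n).le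
  by_cases hlarge : R ≤ |Real.log (a n / b n)|
  · linarith [le_max_left C 0]
  have hK : 0 < K := (mul_pos_iff_of_pos_right (ha n)).mp ((ha' n).trans_le ha'le)
  have hba : b n / a n ≤ Real.exp R :=
    (div_le_exp_abs_log_div (ha n) (hb n)).trans (Real.exp_le_exp.mpr (not_le.mp hlarge).le)
  have hDdiv : D n / a n ≤ D' n / a n + Ba + Bb * (b n / a n) := by
    rw [div_le_iff₀ (ha n)]
    calc D n ≤ D' n + Ba * a n + Bb * b n := hD
      _ = (D' n / a n + Ba + Bb * (b n / a n)) * a n := by field_simp [(ha n).ne']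
  have hBb : Bb * (b n / a n) ≤ |Bb| * Real.exp R :=
    (mul_le_mul_of_nonneg_right (le_abs_self Bb) (div_nonneg (hb n).le (ha n).le)).trans
      (mul_le_mul_of_nonneg_left hba (abs_nonneg Bb))
  have hD'a : max C 0 ≤ D' n / a n / K := by
    rw [le_div_iff₀ hK]
    linarith
  have hD'a' : D' n / a n / K ≤ D' n / a' n := by
    rw [div_div, mul_comm]
    exact div_le_div_of_nonneg_left (hD' n) (ha' n) ha'le
  linarith [le_max_left C 0, abs_nonneg (Real.log (a' n / b' n))]

end

theorem perturbed_parameters_orthogonal_general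
    (N : ℕ)
    (lam : ℕ → ℕ → ℝ) (x : ℕ → ℕ → EuclideanSpace ℝ (Fin N)) (t : ℕ → ℕ → ℝ)
    (hlam : ∀ j n, 0 < lam j n)
    (hortho : OrthoParams lam x t)
    (lam' : ℕ → ℕ → ℝ) (x' : ℕ → ℕ → EuclideanSpace ℝ (Fin N)) (t' : ℕ → ℕ → ℝ)
    (hlam' : ∀ j n, 0 < lam' j n)
    (mu : ℕ → ℝ) (y : ℕ → EuclideanSpace ℝ (Fin N)) (s : ℕ → ℝ)
    (hmu : ∀ j, 0 < mu j)
    (h1 : ∀ j, Tendsto (fun n => lam' j n / lam j n) atTop (nhds (mu j)))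
    (h2 : ∀ j, Tendsto (fun n => (lam j n)⁻¹ • (x' j n - x j n)) atTop (nhds (y j)))
    (h3 : ∀ j, Tendsto (fun n => (t' j n - t j n) / lam j n) atTop (nhds (s j))) :
    OrthoParams lam' x' t' := by
  intro j k hjk
  have hlog (i : ℕ) : ∀ᶠ n in atTop, |Real.log (lam' i n / lam i n)| ≤ |Real.log (mu i)| + 1 :=
    eventually_abs_log_le_of_tendsto (hmu i) (h1 i)
  have herr (i : ℕ) : Tendsto (fun n => (dist (t' i n) (t i n) + dist (x' i n) (x i n)) / lam i n)
      atTop (𝓝 (|s i| + ‖y i‖)) := by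
    refine ((h3 i).abs.add (h2 i).norm).congr fun n => ?_
    rw [norm_smul, Real.norm_eq_abs, abs_inv, abs_div, abs_of_pos (hlam i n), Real.dist_eq,
      dist_eq_norm, add_div, inv_mul_eq_div]
  have key := tendsto_abs_log_div_add_div_of_perturb (b' := lam' k)
    (M := |Real.log (mu j)| + 1 + (|Real.log (mu k)| + 1))
    (Ba := |s j| + ‖y j‖ + 1) (Bb := |s k| + ‖y k‖ + 1)
    (D := fun n => dist (t j n) (t k n) + dist (x j n) (x k n))
    (D' := fun n => dist (t' j n) (t' k n) + dist (x' j n) (x' k n))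
    (hlam j) (hlam k) (hlam' j) (fun n => by positivity)
    (by
      filter_upwards [hlog j, hlog k] with n hj hk
      linarith [abs_log_div_le_of_perturb (hlam j n) (hlam k n) (hlam' j n) (hlam' k n)])
    (by
      filter_upwards [eventually_le_mul_of_tendsto_div (hlam j) (herr j),
        eventually_le_mul_of_tendsto_div (hlam k) (herr k)] with n hj hk
      linarith [dist_add_dist_le_of_perturb (t j n) (t k n) (t' j n) (t' k n)
        (x j n) (x k n) (x' j n) (x' k n)])
    (eventually_le_mul_of_tendsto_div (hlam j) (h1 j))
    (by simpa only [dist_eq_norm, Real.norm_eq_abs, add_div, add_assoc] using hortho j k hjk)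
  simpa only [dist_eq_norm, Real.norm_eq_abs, add_div, add_assoc] using key

/-- First step of the proof of Lemma 3.2: orthogonality of parameters is preserved under
perturbations of the parameters which converge after renormalization by the scales. -/
theorem perturbed_parameters_orthogonal
    (N : ℕ) (hN : 1 ≤ N)
    (lam : ℕ → ℕ → ℝ) (x : ℕ → ℕ → EuclideanSpace ℝ (Fin N)) (t : ℕ → ℕ → ℝ)
    (hlam : ∀ j n, 0 < lam j n)
    (hortho : OrthoParams lam x t)
    (lam' : ℕ → ℕ → ℝ) (x' : ℕ → ℕ → EuclideanSpace ℝ (Fin N)) (t' : ℕ → ℕ → ℝ)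
    (hlam' : ∀ j n, 0 < lam' j n)
    (mu : ℕ → ℝ) (y : ℕ → EuclideanSpace ℝ (Fin N)) (s : ℕ → ℝ)
    (hmu : ∀ j, 0 < mu j)
    (h1 : ∀ j, Tendsto (fun n => lam' j n / lam j n) atTop (nhds (mu j)))
    (h2 : ∀ j, Tendsto (fun n => (lam j n)⁻¹ • (x' j n - x j n)) atTop (nhds (y j)))
    (h3 : ∀ j, Tendsto (fun n => (t' j n - t j n) / lam j n) atTop (nhds (s j))) :
    OrthoParams lam' x' t' :=
  perturbed_parameters_orthogonal_general N lam x t hlam hortho lam' x' t' hlam' mu y s hmu h1 h2 h3
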